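/- For ρ > 0, the improper integral f(ρ) = ∫_ρ^∞ sinh(ρ)/√(sinh²r − sinh²ρ) dr converges; moreover f is increasing in ρ, f(ρ) → 0 as ρ → 0⁺, and f(ρ) → π/2 as ρ → +∞. -/

import Mathlib

open MeasureTheory Set Real Filter Topology

noncomputable def f (ρ : ℝ) : ℝ :=
  ∫ r in Set.Ioi ρ, Real.sinh ρ / Real.sqrt (Real.sinh r ^ 2 - Real.sinh ρ ^ 2)

/-!
Substituting `r = ρ + t` and `u = tanh ρ` turns the integrand into the kernel
`K(u, t) = u / √(sinh²t (1 + u²) + 2u sinh t cosh t)` (`heightKernel`), so `f = F ∘ tanh` with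
`F(u) = ∫₀^∞ K(u, t) dt` (`heightProfile`). For fixed `t > 0`, `K(·, t)` is continuous on `[0, ∞)`
and strictly increasing, as `K(u, t)⁻² = (cosh t + sinh t / u)² - 1`; moreover `K(0, t) = 0` and
`K(1, t) = 1 / √(e^{2t} - 1)` is the derivative of `arccos (e^{-t})`. So `K(1, ·)` dominates every
`K(u, ·)` with `u ∈ [0, 1]` and integrates to `π/2`; by dominated convergence `F` is continuous
on `[0, 1]`, and it increases strictly from `F 0 = 0` to `F 1 = π/2`. Since `tanh` increases
from `0` to `1` on `[0, ∞)`, all claims follow.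
-/

theorem setIntegral_Ioi_eq_integral_comp_const_add {E : Type*} [NormedAddCommGroup E]
    [NormedSpace ℝ E] (g : ℝ → E) (a : ℝ) :
    ∫ x in Ioi a, g x = ∫ t in Ioi 0, g (a + t) := by
  rw [← (measurePreserving_add_left volume a).setIntegral_preimage_emb
    (measurableEmbedding_addLeft a), preimage_const_add_Ioi, sub_self]

theorem integrableOn_Ioi_iff_comp_const_add {E : Type*} [NormedAddCommGroup E]
    {g : ℝ → E} (a : ℝ) :
    IntegrableOn g (Ioi a) ↔ IntegrableOn (fun t => g (a + t)) (Ioi 0) := by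
  rw [← (measurePreserving_add_left volume a).integrableOn_comp_preimage
    (measurableEmbedding_addLeft a), preimage_const_add_Ioi, sub_self]
  rfl

theorem integral_lt_integral_of_ae_lt {α : Type*} [MeasurableSpace α] {μ : Measure α} [NeZero μ]
    {f g : α → ℝ} (hf : Integrable f μ) (hg : Integrable g μ) (hlt : ∀ᵐ x ∂μ, f x < g x) :
    ∫ x, f x ∂μ < ∫ x, g x ∂μ := by
  rw [← sub_pos, ← integral_sub hg hf, integral_pos_iff_support_of_nonneg_ae
    (hlt.mono fun x hx => (sub_pos.2 hx).le) (hg.sub hf), pos_iff_ne_zero,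
    Ne, measure_eq_zero_iff_ae_notMem]
  intro h
  obtain ⟨x, hx, hx0⟩ := (hlt.and h).exists
  exact hx0 (sub_ne_zero.2 hx.ne')

namespace Real

theorem strictMono_tanh : StrictMono tanh := fun x y hxy =>
  lt_of_not_ge fun h => hxy.not_ge <| by
    simpa only [artanh_tanh] using artanh_le_artanh (neg_one_lt_tanh y) (tanh_lt_one x) h

theorem continuous_tanh : Continuous tanh := by
  rw [show tanh = fun x => sinh x / cosh x from funext tanh_eq_sinh_div_cosh]
  exact continuous_sinh.div continuous_cosh fun x => (cosh_pos x).ne'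

theorem tanh_mem_Icc {x : ℝ} (hx : 0 ≤ x) : tanh x ∈ Icc 0 1 :=
  ⟨tanh_zero ▸ strictMono_tanh.monotone hx, (tanh_lt_one x).le⟩

theorem tendsto_tanh_atTop : Tendsto tanh atTop (𝓝 1) := by
  have h : ∀ x, tanh x = (1 - exp (-x) ^ 2) / (1 + exp (-x) ^ 2) := fun x => by
    rw [tanh_eq, exp_neg]
    field_simp
  have he := tendsto_exp_neg_atTop_nhds_zero.pow 2
  have := (tendsto_const_nhds (x := (1 : ℝ)).sub he).div (tendsto_const_nhds.add he)
    (by norm_num : (1 : ℝ) + 0 ^ 2 ≠ 0)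
  rw [funext h]
  simpa [Pi.div_def] using this

end Real

noncomputable def heightKernel (u t : ℝ) : ℝ :=
  u / √(sinh t ^ 2 * (1 + u ^ 2) + 2 * u * sinh t * cosh t)

section
variable {u t : ℝ}

theorem heightKernel_denom_pos (hu : 0 ≤ u) (ht : 0 < t) :
    0 < sinh t ^ 2 * (1 + u ^ 2) + 2 * u * sinh t * cosh t := by
  have := sinh_pos_iff.2 ht
  have := cosh_pos t
  positivity

theorem sinh_div_sqrt_sinh_add_sq_sub_sinh_sq (ρ t : ℝ) :
    sinh ρ / √(sinh (ρ + t) ^ 2 - sinh ρ ^ 2) = heightKernel (tanh ρ) t := by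
  have hc := cosh_pos ρ
  have hs : sinh ρ = cosh ρ * tanh ρ := by
    rw [tanh_eq_sinh_div_cosh, mul_div_cancel₀ _ hc.ne']
  have hsq : sinh (ρ + t) ^ 2 - sinh ρ ^ 2 =
      cosh ρ ^ 2 * (sinh t ^ 2 * (1 + tanh ρ ^ 2) + 2 * tanh ρ * sinh t * cosh t) := by
    rw [sinh_add, hs]
    linear_combination (cosh ρ * tanh ρ) ^ 2 * cosh_sq t
  rw [hsq, sqrt_mul (sq_nonneg _), sqrt_sq hc.le, hs, mul_div_mul_left _ _ hc.ne', heightKernel]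

theorem heightKernel_nonneg (hu : 0 ≤ u) : 0 ≤ heightKernel u t :=
  div_nonneg hu (sqrt_nonneg _)

@[simp]
theorem heightKernel_zero_left (t : ℝ) : heightKernel 0 t = 0 := by
  simp [heightKernel]

theorem heightKernel_strictMonoOn (ht : 0 < t) : StrictMonoOn (heightKernel · t) (Ici 0) := by
  rintro u (hu : 0 ≤ u) v (hv : 0 ≤ v) huv
  have hDu := heightKernel_denom_pos hu ht
  have hDv := heightKernel_denom_pos hv ht
  refine lt_of_pow_lt_pow_left₀ 2 (heightKernel_nonneg hv) ?_
  simp only [heightKernel, div_pow, sq_sqrt hDu.le, sq_sqrt hDv.le]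
  rw [div_lt_div_iff₀ hDu hDv]
  have hs := sinh_pos_iff.2 ht
  -- with `D` the radicand, v²D(u) − u²D(v) = sinh²t (v² − u²) + 2uv sinh t cosh t (v − u)
  nlinarith [mul_pos (pow_pos hs 2) (mul_pos (sub_pos.2 huv) (by linarith : 0 < u + v)),
    mul_nonneg (mul_nonneg (mul_nonneg hu hv) (mul_pos hs (cosh_pos t)).le) (sub_pos.2 huv).le]

theorem continuousOn_heightKernel (ht : 0 < t) : ContinuousOn (heightKernel · t) (Ici 0) :=
  continuousOn_id.div (by fun_prop) fun u hu => (sqrt_pos.2 (heightKernel_denom_pos hu ht)).ne'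

theorem measurable_heightKernel (u : ℝ) : Measurable (heightKernel u) := by
  unfold heightKernel
  fun_prop

theorem hasDerivAt_arccos_exp_neg (ht : 0 < t) :
    HasDerivAt (fun t => arccos (exp (-t))) (heightKernel 1 t) t := by
  have hw : exp (-t) < 1 := exp_lt_one_iff.2 (neg_lt_zero.2 ht)
  have hw0 := exp_pos (-t)
  refine ((hasDerivAt_arccos (by linarith) hw.ne).comp t (hasDerivAt_neg t).exp).congr_deriv ?_
  have hD : sinh t ^ 2 * (1 + 1 ^ 2) + 2 * 1 * sinh t * cosh t =
      (1 - exp (-t) ^ 2) / exp (-t) ^ 2 := by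
    rw [sinh_eq, cosh_eq, exp_neg]
    field_simp
    ring
  rw [heightKernel, hD, sqrt_div' _ (sq_nonneg _), sqrt_sq hw0.le]
  field_simp


theorem tendsto_arccos_exp_neg_atTop : Tendsto (fun t => arccos (exp (-t))) atTop (𝓝 (π / 2)) := by
  rw [← arccos_zero]
  exact (continuous_arccos.tendsto 0).comp tendsto_exp_neg_atTop_nhds_zero

theorem integrableOn_heightKernel_one : IntegrableOn (heightKernel 1) (Ioi 0) :=
  integrableOn_Ioi_deriv_of_nonneg (by fun_prop) (fun _ => hasDerivAt_arccos_exp_neg)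
    (fun _ _ => heightKernel_nonneg zero_le_one) tendsto_arccos_exp_neg_atTop

theorem norm_heightKernel_le (hu : u ∈ Icc 0 1) (ht : 0 < t) :
    ‖heightKernel u t‖ ≤ heightKernel 1 t := by
  rw [norm_of_nonneg (heightKernel_nonneg hu.1)]
  exact (heightKernel_strictMonoOn ht).monotoneOn hu.1 (mem_Ici.2 zero_le_one) hu.2

theorem integrableOn_heightKernel (hu : u ∈ Icc 0 1) : IntegrableOn (heightKernel u) (Ioi 0) :=
  integrableOn_heightKernel_one.mono' (measurable_heightKernel u).aestronglyMeasurable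
    ((ae_restrict_iff' measurableSet_Ioi).2 (.of_forall fun _ => norm_heightKernel_le hu))

noncomputable def heightProfile (u : ℝ) : ℝ := ∫ t in Ioi 0, heightKernel u t

theorem continuousOn_heightProfile : ContinuousOn heightProfile (Icc 0 1) :=
  continuousOn_of_dominated (fun u _ => (measurable_heightKernel u).aestronglyMeasurable)
    (fun _ hu => (ae_restrict_iff' measurableSet_Ioi).2
      (.of_forall fun _ => norm_heightKernel_le hu))
    integrableOn_heightKernel_one
    ((ae_restrict_iff' measurableSet_Ioi).2 (.of_forall fun _ ht =>
      (continuousOn_heightKernel ht).mono Icc_subset_Ici_self))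

theorem strictMonoOn_heightProfile : StrictMonoOn heightProfile (Icc 0 1) := by
  intro u hu v hv huv
  have : NeZero (volume.restrict (Ioi (0 : ℝ))) := ⟨by simp [Measure.restrict_eq_zero]⟩
  exact integral_lt_integral_of_ae_lt
    (integrableOn_heightKernel hu) (integrableOn_heightKernel hv)
    ((ae_restrict_iff' measurableSet_Ioi).2 (.of_forall fun _ ht =>
      heightKernel_strictMonoOn ht hu.1 hv.1 huv))

@[simp]
theorem heightProfile_zero : heightProfile 0 = 0 := by
  simp [heightProfile]

@[simp]
theorem heightProfile_one : heightProfile 1 = π / 2 := by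
  rw [heightProfile, integral_Ioi_of_hasDerivAt_of_nonneg (by fun_prop)
    (fun _ => hasDerivAt_arccos_exp_neg) (fun _ _ => heightKernel_nonneg zero_le_one)
    tendsto_arccos_exp_neg_atTop]
  simp

end

theorem f_eq_heightProfile_tanh (ρ : ℝ) : f ρ = heightProfile (tanh ρ) := by
  rw [f, setIntegral_Ioi_eq_integral_comp_const_add]
  simp_rw [sinh_div_sqrt_sinh_add_sq_sub_sinh_sq]
  rfl

theorem integrableOn_sinh_div_sqrt_sinh_sq_sub_sinh_sq {ρ : ℝ} (hρ : 0 ≤ ρ) :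
    IntegrableOn (fun r => sinh ρ / √(sinh r ^ 2 - sinh ρ ^ 2)) (Ioi ρ) := by
  rw [integrableOn_Ioi_iff_comp_const_add]
  simp_rw [sinh_div_sqrt_sinh_add_sq_sub_sinh_sq]
  exact integrableOn_heightKernel (tanh_mem_Icc hρ)

theorem stmt_6 :
    (∀ ρ : ℝ, 0 < ρ →
      IntegrableOn (fun r : ℝ => Real.sinh ρ / Real.sqrt (Real.sinh r ^ 2 - Real.sinh ρ ^ 2))
        (Set.Ioi ρ)) ∧
    StrictMonoOn f (Set.Ioi (0 : ℝ)) ∧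
    Tendsto f (𝓝[>] (0 : ℝ)) (𝓝 0) ∧
    Tendsto f atTop (𝓝 (Real.pi / 2)) := by
  have hf : f = heightProfile ∘ tanh := funext f_eq_heightProfile_tanh
  refine ⟨fun ρ hρ => integrableOn_sinh_div_sqrt_sinh_sq_sub_sinh_sq hρ.le, ?_, ?_, ?_⟩
  · rw [hf]
    exact strictMonoOn_heightProfile.comp (strictMono_tanh.strictMonoOn _)
      fun x hx => tanh_mem_Icc (le_of_lt hx)
  · suffices Tendsto (heightProfile ∘ tanh) (𝓝[>] 0) (𝓝 (heightProfile 0)) by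
      rwa [heightProfile_zero, ← hf] at this
    refine (continuousOn_heightProfile.continuousWithinAt ⟨le_rfl, zero_le_one⟩).tendsto.comp
      (tendsto_nhdsWithin_iff.2 ⟨?_, ?_⟩)
    · exact (continuous_tanh.tendsto' 0 0 tanh_zero).mono_left nhdsWithin_le_nhds
    · exact eventually_mem_nhdsWithin.mono fun x hx => tanh_mem_Icc (le_of_lt hx)
  · suffices Tendsto (heightProfile ∘ tanh) atTop (𝓝 (heightProfile 1)) by
      rwa [heightProfile_one, ← hf] at this
    refine (continuousOn_heightProfile.continuousWithinAt ⟨zero_le_one, le_rfl⟩).tendsto.comp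
      (tendsto_nhdsWithin_iff.2 ⟨tendsto_tanh_atTop, ?_⟩)
    exact (eventually_ge_atTop 0).mono fun x hx => tanh_mem_Icc hx
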